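/- Let n > p ≥ 1, let Y ∈ ℝⁿ and let X be a real n×p matrix. Let 𝟙 ∈ ℝⁿ be the all-ones vector, W = [𝟙 X] the n×(p+1) matrix obtained by prepending 𝟙 as a column, X̄ ∈ ℝ^p the vector of column means of X, Ȳ the mean of Y, X̃ = X − 𝟙X̄ᵀ the column-centered matrix and Ỹ = Y − Ȳ𝟙. Assume X̃ᵀX̃ is invertible. Then WᵀW is invertible, and the least-squares vector β̂ = (WᵀW)⁻¹WᵀY satisfies: its last p coordinates equal γ̂ = (X̃ᵀX̃)⁻¹X̃ᵀỸ and its first coordinate equals δ̂ = Ȳ − X̄ᵀγ̂. -/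

import Mathlib

open Matrix BigOperators

/-!
Write X = X̃ + 𝟙X̄ᵀ. Then W(δ, γ) = (δ + X̄ᵀγ)𝟙 + X̃γ, and 𝟙ᵀX̃ = 0 because X̃ is centered.
Pairing W v = 0 with 𝟙 kills the X̃-part, so W is injective as soon as X̃ is, and WᵀW is
positive definite. For β = (Ȳ − X̄ᵀγ̂, γ̂) the residual Wβ − Y = X̃γ̂ − Ỹ sums to zero and is
orthogonal to the columns of X̃ (normal equations for γ̂), hence to all columns of W; so β
solves the normal equations of W and equals β̂.
-/

theorem sum_sub_sum_div_card {m K : Type*} [Fintype m] [Field K] (y : m → K)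
    (hm : (Fintype.card m : K) ≠ 0) :
    ∑ i, (y i - (∑ j, y j) / Fintype.card m) = 0 := by
  rw [Finset.sum_sub_distrib, Finset.sum_const, Finset.card_univ, nsmul_eq_mul,
    mul_div_cancel₀ _ hm, sub_self]

namespace Matrix

variable {m K : Type*} {p : ℕ}

def prependOnes [One K] (X : Matrix m (Fin p) K) : Matrix m (Fin (p + 1)) K :=
  of fun i => vecCons 1 (X i)

section CommRing

variable [CommRing K]

theorem prependOnes_mulVec_cons (X : Matrix m (Fin p) K) (δ : K) (γ : Fin p → K) :
    prependOnes X *ᵥ vecCons δ γ = δ • 1 + X *ᵥ γ :=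
  mulVec_cons _ δ γ

theorem prependOnes_mulVec_cons_eq_smul_one_add (X : Matrix m (Fin p) K) (c : Fin p → K)
    (δ : K) (γ : Fin p → K) :
    prependOnes X *ᵥ vecCons δ γ = (δ + c ⬝ᵥ γ) • 1 + (X - replicateRow m c) *ᵥ γ := by
  ext i
  simp [prependOnes_mulVec_cons, sub_mulVec, replicateRow_mulVec_eq_const]

variable [Fintype m]

theorem prependOnes_transpose_mulVec (X : Matrix m (Fin p) K) (r : m → K) :
    (prependOnes X)ᵀ *ᵥ r = vecCons (∑ i, r i) (Xᵀ *ᵥ r) := by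
  ext j
  refine Fin.cases ?_ (fun k => ?_) j <;> simp [prependOnes, mulVec, dotProduct]

theorem prependOnes_transpose_mulVec_eq_zero {X : Matrix m (Fin p) K} {c : Fin p → K}
    {r : m → K} (hr : ∑ i, r i = 0) (hXr : (X - replicateRow m c)ᵀ *ᵥ r = 0) :
    (prependOnes X)ᵀ *ᵥ r = 0 := by
  rw [transpose_sub, sub_mulVec, transpose_replicateRow, sub_eq_zero] at hXr
  have hcr : replicateCol m c *ᵥ r = 0 := by
    ext j
    simp [mulVec, dotProduct, ← Finset.mul_sum, hr]
  rw [prependOnes_transpose_mulVec, hr, hXr, hcr, cons_zero_zero]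

theorem prependOnes_transpose_mulVec_residual_eq_zero {X : Matrix m (Fin p) K}
    {c : Fin p → K} (hc : 1 ᵥ* (X - replicateRow m c) = 0) {y : m → K} (hy : ∑ i, y i = 0)
    {γ : Fin p → K} (hγ : (X - replicateRow m c)ᵀ *ᵥ ((X - replicateRow m c) *ᵥ γ - y) = 0)
    (b : K) :
    (prependOnes X)ᵀ *ᵥ (prependOnes X *ᵥ vecCons (b - c ⬝ᵥ γ) γ - (b • 1 + y)) = 0 := by
  rw [prependOnes_mulVec_cons_eq_smul_one_add X c, sub_add_cancel,
    add_sub_add_left_eq_sub]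
  refine prependOnes_transpose_mulVec_eq_zero ?_ hγ
  rw [← one_dotProduct, dotProduct_sub, dotProduct_mulVec, hc, one_dotProduct, hy,
    zero_dotProduct, sub_zero]

variable {n : Type*} [Fintype n] [DecidableEq n]

theorem mulVec_injective_of_isUnit_det_transpose_mul_self {A : Matrix m n K}
    (h : IsUnit (Aᵀ * A).det) : Function.Injective A.mulVec := by
  have hcomp : (Aᵀ * A).mulVec = Aᵀ.mulVec ∘ A.mulVec :=
    funext fun v => (mulVec_mulVec v _ _).symm
  exact (hcomp ▸ mulVec_injective_of_isUnit ((isUnit_iff_isUnit_det _).2 h)).of_comp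

theorem inv_transpose_mul_self_mulVec_eq {A : Matrix m n K} (h : IsUnit (Aᵀ * A).det)
    {y : m → K} {β : n → K} (hβ : Aᵀ *ᵥ (A *ᵥ β - y) = 0) :
    (Aᵀ * A)⁻¹ *ᵥ (Aᵀ *ᵥ y) = β := by
  rw [mulVec_sub, sub_eq_zero, mulVec_mulVec] at hβ
  rw [← hβ, mulVec_mulVec, nonsing_inv_mul _ h, one_mulVec]

end CommRing

variable [Fintype m]

theorem isUnit_det_conjTranspose_mul_self {n : Type*} [Fintype n] [DecidableEq n] [Field K]
    [PartialOrder K] [StarRing K] [StarOrderedRing K] {A : Matrix m n K}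
    (hA : Function.Injective A.mulVec) : IsUnit (Aᴴ * A).det :=
  (isUnit_iff_isUnit_det _).1 (PosDef.conjTranspose_mul_self A hA).isUnit

theorem prependOnes_mulVec_injective [Field K] {X : Matrix m (Fin p) K} {c : Fin p → K}
    (hm : (Fintype.card m : K) ≠ 0) (hc : 1 ᵥ* (X - replicateRow m c) = 0)
    (hinj : Function.Injective (X - replicateRow m c).mulVec) :
    Function.Injective (prependOnes X).mulVec := by
  refine (injective_iff_map_eq_zero (prependOnes X).mulVecLin).2 fun v hv => ?_
  rw [← cons_head_tail v] at hv ⊢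
  set a := vecHead v + c ⬝ᵥ vecTail v
  have hWv : a • 1 + (X - replicateRow m c) *ᵥ vecTail v = 0 := by
    rw [← prependOnes_mulVec_cons_eq_smul_one_add]
    exact hv
  have ha : a = 0 := by
    have h1 := congrArg (1 ⬝ᵥ ·) hWv
    simp only [dotProduct_add, dotProduct_smul, dotProduct_mulVec, hc, one_dotProduct_one,
      zero_dotProduct, dotProduct_zero] at h1
    simpa [hm] using h1
  have htail : vecTail v = 0 := hinj (by simpa [ha] using hWv)
  have hhead : vecHead v = 0 := by simpa [a, htail] using ha
  rw [htail, hhead, cons_zero_zero]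

end Matrix

theorem least_squares_with_intercept_general (n p : ℕ) (hn : p < n)
    (Y : Fin n → ℝ) (X : Matrix (Fin n) (Fin p) ℝ) :
    let W : Matrix (Fin n) (Fin (p + 1)) ℝ :=
      Matrix.of fun i j => Fin.cases (1 : ℝ) (fun k => X i k) j
    let Xbar : Fin p → ℝ := fun j => (∑ i, X i j) / n
    let Ybar : ℝ := (∑ i, Y i) / n
    let Xc : Matrix (Fin n) (Fin p) ℝ := Matrix.of fun i j => X i j - Xbar j
    let Yc : Fin n → ℝ := fun i => Y i - Ybar
    ∀ _ : IsUnit (Xcᵀ * Xc).det,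
      IsUnit (Wᵀ * W).det ∧
      (let βhat : Fin (p + 1) → ℝ := (Wᵀ * W)⁻¹ *ᵥ (Wᵀ *ᵥ Y)
       let γhat : Fin p → ℝ := (Xcᵀ * Xc)⁻¹ *ᵥ (Xcᵀ *ᵥ Yc)
       (∀ k : Fin p, βhat k.succ = γhat k) ∧
       βhat 0 = Ybar - ∑ j, Xbar j * γhat j) := by
  intro W Xbar Ybar Xc Yc hM
  have hn0 : (Fintype.card (Fin n) : ℝ) ≠ 0 := by
    rw [Fintype.card_fin]
    exact Nat.cast_ne_zero.2 (by omega)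
  have hXc_cols : 1 ᵥ* Xc = 0 := by
    ext j
    simpa only [vecMul, one_dotProduct, Fintype.card_fin, Xc, Xbar, of_apply,
      Pi.zero_apply] using sum_sub_sum_div_card (X · j) hn0
  have hYc : ∑ i, Yc i = 0 := by simpa only [Fintype.card_fin] using sum_sub_sum_div_card Y hn0
  have hWW : IsUnit (Wᵀ * W).det := by
    rw [← conjTranspose_eq_transpose_of_trivial]
    exact isUnit_det_conjTranspose_mul_self (prependOnes_mulVec_injective hn0 hXc_cols
      (mulVec_injective_of_isUnit_det_transpose_mul_self hM))
  refine ⟨hWW, ?_⟩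
  intro βhat γhat
  have hγ : Xcᵀ *ᵥ (Xc *ᵥ γhat - Yc) = 0 := by
    rw [mulVec_sub, mulVec_mulVec, mulVec_mulVec, mul_nonsing_inv _ hM, one_mulVec, sub_self]
  have hY : Y = Ybar • 1 + Yc := by
    ext i
    simp [Yc]
  have hβ : βhat = vecCons (Ybar - Xbar ⬝ᵥ γhat) γhat := by
    refine inv_transpose_mul_self_mulVec_eq hWW ?_
    rw [hY]
    exact prependOnes_transpose_mulVec_residual_eq_zero hXc_cols hYc hγ Ybar
  rw [hβ]
  exact ⟨fun k => rfl, rfl⟩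

/-- With W = [𝟙 X] the design matrix with intercept, if the centered
Gram matrix X̃ᵀX̃ is invertible then so is WᵀW, and the least-squares vector
β̂ = (WᵀW)⁻¹WᵀY has last p coordinates γ̂ = (X̃ᵀX̃)⁻¹X̃ᵀỸ and first coordinate
δ̂ = Ȳ − X̄ᵀγ̂. -/
theorem least_squares_with_intercept (n p : ℕ) (hp : 1 ≤ p) (hn : p < n)
    (Y : Fin n → ℝ) (X : Matrix (Fin n) (Fin p) ℝ) :
    let W : Matrix (Fin n) (Fin (p + 1)) ℝ :=
      Matrix.of fun i j => Fin.cases (1 : ℝ) (fun k => X i k) j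
    let Xbar : Fin p → ℝ := fun j => (∑ i, X i j) / n
    let Ybar : ℝ := (∑ i, Y i) / n
    let Xc : Matrix (Fin n) (Fin p) ℝ := Matrix.of fun i j => X i j - Xbar j
    let Yc : Fin n → ℝ := fun i => Y i - Ybar
    ∀ _ : IsUnit (Xcᵀ * Xc).det,
      IsUnit (Wᵀ * W).det ∧
      (let βhat : Fin (p + 1) → ℝ := (Wᵀ * W)⁻¹ *ᵥ (Wᵀ *ᵥ Y)
       let γhat : Fin p → ℝ := (Xcᵀ * Xc)⁻¹ *ᵥ (Xcᵀ *ᵥ Yc)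
       (∀ k : Fin p, βhat k.succ = γhat k) ∧
       βhat 0 = Ybar - ∑ j, Xbar j * γhat j) :=
  least_squares_with_intercept_general n p hn Y X
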